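/- arXiv:2210.03878 — 2 statements merged into one kernel-verified Lean document; each statement's English description precedes it below -/
import Mathlib

section
/- Stability of the two-ends condition under passing to large subsets: Let ε ∈ (0,1), ε' with ε > ε' > ε^{100} > 0, and C₀ ≥ 1. There exist δ₀ > 0 depending only on ε, ε', C₀ and an absolute constant C > 0 such that for all 0 < δ < δ₀ the following holds. Let T be a δ×δ×1 tube in ℝ³, let Y ⊆ T be a measurable shading which is quantitative two-ends at scale ε' with constant C₀, and let Y' ⊆ Y be measurable with |Y'| ≥ δ^{ε'/4}|Y|. Then there exists a measurable subset Y'' ⊆ Y' which is quantitative two-ends at scale ε'/2 with constant 2 and which satisfies |Y''| ≥ (C log δ^{-1})^{-1}|Y'|. -/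
open MeasureTheory Metric Set
open scoped ENNReal

/-- A (parametrized) tube in `ℝ³`: a base point and a unit direction. -/
structure Tube where
  base : EuclideanSpace ℝ (Fin 3)
  dir : EuclideanSpace ℝ (Fin 3)
  dir_norm : ‖dir‖ = 1

/-- The `δ×δ×1` tube determined by `T`:
`{base + t•dir + w : t ∈ [0,1], w ⟂ dir, ‖w‖ ≤ δ}`. -/
def Tube.toSet (T : Tube) (δ : ℝ) : Set (EuclideanSpace ℝ (Fin 3)) :=
  {x | ∃ (t : ℝ) (w : EuclideanSpace ℝ (Fin 3)),
    t ∈ Set.Icc (0 : ℝ) 1 ∧ (inner ℝ w T.dir : ℝ) = 0 ∧ ‖w‖ ≤ δ ∧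
    x = T.base + t • T.dir + w}

/-- The `j`-th segment of the `δ×δ×1` tube `T` for the partition of `[0,1]`
into consecutive subintervals of length `δ^ε`. -/
def Tube.seg (T : Tube) (δ ε : ℝ) (j : ℕ) : Set (EuclideanSpace ℝ (Fin 3)) :=
  {x | ∃ (t : ℝ) (w : EuclideanSpace ℝ (Fin 3)),
    t ∈ Set.Icc (0 : ℝ) 1 ∧ t ∈ Set.Ico ((j : ℝ) * δ ^ ε) (((j : ℝ) + 1) * δ ^ ε) ∧
    (inner ℝ w T.dir : ℝ) = 0 ∧ ‖w‖ ≤ δ ∧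
    x = T.base + t • T.dir + w}

/-- A shading `Y ⊆ T` of a `δ×δ×1` tube is *quantitative two-ends at scale `ε'`
with constant `C₀`*. -/
def QuantTwoEnds (δ ε ε' C₀ : ℝ) (T : Tube) (Y : Set (EuclideanSpace ℝ (Fin 3))) : Prop :=
  (∃ a : ℝ, 0 < a ∧ ∀ j : ℕ, j < ⌈δ ^ (-ε)⌉₊ → 0 < volume (Y ∩ T.seg δ ε j) →
      ENNReal.ofReal a ≤ volume (Y ∩ T.seg δ ε j) ∧
      volume (Y ∩ T.seg δ ε j) ≤ ENNReal.ofReal (C₀ * a)) ∧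
  δ ^ (-ε') ≤ (({j : ℕ | j < ⌈δ ^ (-ε)⌉₊ ∧ 0 < volume (Y ∩ T.seg δ ε j)}).ncard : ℝ)

/-!
Let `a` be the lower mass bound of the nonempty segments of `Y`. Then `|Y| ≥ δ^{-ε'} a`, so
`|Y'| ≥ δ^{-3ε'/4} a`, while every segment of `Y'` has mass at most `C₀ a`. There are only
`O(δ⁻¹)` segments, so those of mass below `C₀ a δ²` carry at most half of `|Y'|`; the others
fall into `O(log δ⁻¹)` dyadic mass ranges, one of which carries a `≳ 1 / log δ⁻¹` share of `|Y'|`.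
The part `Y''` of `Y'` on the segments of that range is two-ends with constant `2`, and it has at
least `δ^{-3ε'/4} / (C₀ log δ⁻¹) ≥ δ^{-ε'/2}` segments once `δ` is small.
-/

open Function Real Filter Topology
open scoped Finset

section DyadicPigeonhole

variable {ι : Type*}

noncomputable def dyadicLevel (s : Finset ι) (f : ι → ℝ) (M : ℝ) (k : ℕ) : Finset ι :=
  {j ∈ s | f j ∈ Ioc (M / 2 ^ (k + 1)) (M / 2 ^ k)}

lemma dyadicLevel_subset (s : Finset ι) (f : ι → ℝ) (M : ℝ) (k : ℕ) :
    dyadicLevel s f M k ⊆ s :=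
  Finset.filter_subset _ s

lemma exists_le_mem_Ioc_div_two_pow {x M : ℝ} {K : ℕ} (hx : M / 2 ^ (K + 1) < x)
    (hxM : x ≤ M) : ∃ k ≤ K, x ∈ Ioc (M / 2 ^ (k + 1)) (M / 2 ^ k) := by
  induction K with
  | zero => exact ⟨0, le_rfl, by simpa using hx, by simpa using hxM⟩
  | succ K ih =>
    by_cases h : M / 2 ^ (K + 1) < x
    · obtain ⟨k, hk, hxk⟩ := ih h
      exact ⟨k, hk.trans K.le_succ, hxk⟩
    · exact ⟨K + 1, le_rfl, hx, not_lt.1 h⟩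

lemma pairwise_disjoint_Ioc_div_two_pow {M : ℝ} (hM : 0 ≤ M) :
    Pairwise (Disjoint on fun k : ℕ => Ioc (M / 2 ^ (k + 1)) (M / 2 ^ k)) := by
  refine (pairwise_disjoint_on _).2 fun k l hkl => disjoint_left.2 fun x hxk hxl => ?_
  have : M / 2 ^ l ≤ M / 2 ^ (k + 1) :=
    div_le_div_of_nonneg_left hM (by positivity) (pow_le_pow_right₀ one_le_two hkl)
  linarith [hxk.1, hxl.2]

variable (s : Finset ι) (f : ι → ℝ) {M : ℝ}

lemma sum_le_card_mul_add_sum_dyadicLevel (hM : 0 ≤ M) (hf : ∀ j ∈ s, f j ≤ M) (K : ℕ) :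
    ∑ j ∈ s, f j ≤
      #s * (M / 2 ^ (K + 1)) + ∑ k ∈ Finset.range (K + 1), ∑ j ∈ dyadicLevel s f M k, f j := by
  classical
  have hdisj : (Finset.range (K + 1) : Set ℕ).PairwiseDisjoint (dyadicLevel s f M) :=
    fun k _ l _ hkl => Finset.disjoint_left.2 fun j hjk hjl =>
      disjoint_left.1 (pairwise_disjoint_Ioc_div_two_pow hM hkl)
        (Finset.mem_filter.1 hjk).2 (Finset.mem_filter.1 hjl).2
  have hlevels : {j ∈ s | M / 2 ^ (K + 1) < f j} =
      (Finset.range (K + 1)).biUnion (dyadicLevel s f M) := by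
    ext j
    simp only [dyadicLevel, Finset.mem_filter, Finset.mem_biUnion, Finset.mem_range,
      Nat.lt_succ_iff]
    constructor
    · rintro ⟨hj, hjK⟩
      obtain ⟨k, hk, hjk⟩ := exists_le_mem_Ioc_div_two_pow hjK (hf j hj)
      exact ⟨k, hk, hj, hjk⟩
    · rintro ⟨k, hk, hj, hjk⟩
      refine ⟨hj, lt_of_le_of_lt ?_ hjk.1⟩
      exact div_le_div_of_nonneg_left hM (by positivity) (pow_le_pow_right₀ one_le_two (by omega))
  rw [← Finset.sum_biUnion hdisj, ← hlevels,
    ← Finset.sum_filter_add_sum_filter_not s (fun j => M / 2 ^ (K + 1) < f j) f, add_comm]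
  gcongr
  calc ∑ j ∈ s with ¬M / 2 ^ (K + 1) < f j, f j
      ≤ #{j ∈ s | ¬M / 2 ^ (K + 1) < f j} • (M / 2 ^ (K + 1)) :=
        Finset.sum_le_card_nsmul _ _ _ fun j hj => not_lt.1 (Finset.mem_filter.1 hj).2
    _ ≤ #s * (M / 2 ^ (K + 1)) := by
        rw [nsmul_eq_mul]
        gcongr
        exact Finset.filter_subset _ s

/-- `hK` says that the indices with `f j ≤ M / 2^(K+1)` carry at most half of the sum. -/
lemma exists_sum_dyadicLevel_ge (hM : 0 ≤ M) (hf : ∀ j ∈ s, f j ≤ M) {K : ℕ}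
    (hK : #s * M ≤ 2 ^ K * ∑ j ∈ s, f j) :
    ∃ k, (∑ j ∈ s, f j) / (2 * (K + 1)) ≤ ∑ j ∈ dyadicLevel s f M k, f j := by
  have htail : #s * (M / 2 ^ (K + 1)) ≤ (∑ j ∈ s, f j) / 2 := by
    rw [pow_succ, mul_div_assoc', div_le_div_iff₀ (by positivity) two_pos]
    nlinarith
  have hsum : ∑ _k ∈ Finset.range (K + 1), (∑ j ∈ s, f j) / (2 * (K + 1)) ≤
      ∑ k ∈ Finset.range (K + 1), ∑ j ∈ dyadicLevel s f M k, f j := by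
    rw [Finset.sum_const, Finset.card_range, nsmul_eq_mul]
    have hsplit := sum_le_card_mul_add_sum_dyadicLevel s f hM hf K
    have hshare : ((K + 1 : ℕ) : ℝ) * ((∑ j ∈ s, f j) / (2 * (K + 1))) =
        (∑ j ∈ s, f j) / 2 := by
      push_cast
      field_simp
    linarith
  obtain ⟨k, -, hk⟩ := Finset.exists_le_of_sum_le Finset.nonempty_range_add_one hsum
  exact ⟨k, hk⟩

end DyadicPigeonhole

lemma pairwise_disjoint_Ico_natCast_mul (h : ℝ) :
    Pairwise (Disjoint on fun j : ℕ => Ico (j * h) ((j + 1) * h)) := fun i j hij => by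
  simpa [onFun, zsmul_eq_mul, add_mul] using
    pairwise_disjoint_Ico_add_zsmul (0 : ℝ) h (Nat.cast_injective.ne hij : (i : ℤ) ≠ j)

lemma exists_lt_ceil_inv_mem_Ico {h t : ℝ} (hh : 0 < h) (ht : t ∈ Ico 0 1) :
    ∃ j < ⌈h⁻¹⌉₊, t ∈ Ico (j * h) ((j + 1) * h) := by
  have hth : 0 ≤ t / h := div_nonneg ht.1 hh.le
  refine ⟨⌊t / h⌋₊, ?_, ?_, ?_⟩
  · rw [Nat.floor_lt hth]
    refine lt_of_lt_of_le ?_ (Nat.le_ceil _)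
    rw [div_lt_iff₀ hh, inv_mul_cancel₀ hh.ne']
    exact ht.2
  · exact (le_div_iff₀ hh).1 (Nat.floor_le hth)
  · exact (div_lt_iff₀ hh).1 (Nat.lt_floor_add_one _)

lemma natCeil_rpow_neg_le_two_div {δ ε : ℝ} (hδ : 0 < δ) (hδ1 : δ ≤ 1) (hε : ε ≤ 1) :
    (⌈δ ^ (-ε)⌉₊ : ℝ) ≤ 2 / δ := by
  have hle : δ ^ (-ε) ≤ δ⁻¹ := by
    rw [← rpow_neg_one]
    exact rpow_le_rpow_of_exponent_ge hδ hδ1 (by linarith)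
  have hone : 1 ≤ δ⁻¹ := (one_le_inv₀ hδ).2 hδ1
  have hceil := Nat.ceil_lt_add_one (rpow_nonneg hδ.le (-ε))
  have htwo : 2 / δ = δ⁻¹ + δ⁻¹ := by ring
  linarith

namespace Tube

variable (T : Tube)

noncomputable def param (x : EuclideanSpace ℝ (Fin 3)) : ℝ := inner ℝ (x - T.base) T.dir

lemma inner_dir_self : inner ℝ T.dir T.dir = 1 := by
  rw [real_inner_self_eq_norm_sq, T.dir_norm, one_pow]

lemma param_base_add {t : ℝ} {w : EuclideanSpace ℝ (Fin 3)} (hw : inner ℝ w T.dir = 0) :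
    T.param (T.base + t • T.dir + w) = t := by
  rw [param, add_assoc, add_sub_cancel_left, inner_add_left, real_inner_smul_left, hw,
    T.inner_dir_self, mul_one, add_zero]

@[fun_prop]
lemma continuous_param : Continuous T.param :=
  (continuous_id.sub continuous_const).inner continuous_const

lemma mem_toSet_iff {δ : ℝ} {x : EuclideanSpace ℝ (Fin 3)} :
    x ∈ T.toSet δ ↔ T.param x ∈ Icc 0 1 ∧ ‖x - T.base - T.param x • T.dir‖ ≤ δ := by
  constructor
  · rintro ⟨t, w, ht, hw, hwδ, rfl⟩
    rw [T.param_base_add hw, show T.base + t • T.dir + w - T.base - t • T.dir = w by abel]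
    exact ⟨ht, hwδ⟩
  · rintro ⟨ht, hwδ⟩
    refine ⟨T.param x, x - T.base - T.param x • T.dir, ht, ?_, hwδ, by abel⟩
    rw [inner_sub_left, real_inner_smul_left, T.inner_dir_self, mul_one, param, sub_self]

lemma measurableSet_toSet (δ : ℝ) : MeasurableSet (T.toSet δ) := by
  have hoff : Continuous fun x => ‖x - T.base - T.param x • T.dir‖ := by fun_prop
  rw [show T.toSet δ = T.param ⁻¹' Icc 0 1 ∩ {x | ‖x - T.base - T.param x • T.dir‖ ≤ δ} from
    Set.ext fun x => T.mem_toSet_iff]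
  exact (T.continuous_param.measurable measurableSet_Icc).inter
    (measurableSet_le hoff.measurable measurable_const)

lemma mem_seg_iff {δ ε : ℝ} {j : ℕ} {x : EuclideanSpace ℝ (Fin 3)} :
    x ∈ T.seg δ ε j ↔ x ∈ T.toSet δ ∧ T.param x ∈ Ico (j * δ ^ ε) ((j + 1) * δ ^ ε) := by
  constructor
  · rintro ⟨t, w, ht, htj, hw, hwδ, rfl⟩
    exact ⟨⟨t, w, ht, hw, hwδ, rfl⟩, (T.param_base_add hw).symm ▸ htj⟩
  · rintro ⟨⟨t, w, ht, hw, hwδ, rfl⟩, htj⟩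
    rw [T.param_base_add hw] at htj
    exact ⟨t, w, ht, htj, hw, hwδ, rfl⟩

lemma seg_eq_toSet_inter (δ ε : ℝ) (j : ℕ) :
    T.seg δ ε j = T.toSet δ ∩ T.param ⁻¹' Ico (j * δ ^ ε) ((j + 1) * δ ^ ε) :=
  Set.ext fun _ => T.mem_seg_iff

lemma measurableSet_seg (δ ε : ℝ) (j : ℕ) : MeasurableSet (T.seg δ ε j) := by
  rw [seg_eq_toSet_inter]
  exact (T.measurableSet_toSet δ).inter (T.continuous_param.measurable measurableSet_Ico)

lemma pairwise_disjoint_seg (δ ε : ℝ) : Pairwise (Disjoint on T.seg δ ε) := fun i j hij => by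
  simp only [onFun, seg_eq_toSet_inter]
  exact ((pairwise_disjoint_Ico_natCast_mul _ hij).preimage T.param).mono
    inter_subset_right inter_subset_right

/-- When `δ^{-ε}` is an integer, the last segment stops just short of the end `t = 1`. -/
lemma param_eq_one_of_mem_toSet_of_notMem_seg {δ ε : ℝ} (hδ : 0 < δ)
    {x : EuclideanSpace ℝ (Fin 3)} (hx : x ∈ T.toSet δ)
    (hseg : x ∉ ⋃ j ∈ Finset.range ⌈δ ^ (-ε)⌉₊, T.seg δ ε j) : T.param x = 1 := by
  have hx' := T.mem_toSet_iff.1 hx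
  by_contra hne
  obtain ⟨j, hj, htj⟩ := exists_lt_ceil_inv_mem_Ico (rpow_pos_of_pos hδ ε)
    ⟨hx'.1.1, lt_of_le_of_ne hx'.1.2 hne⟩
  rw [← rpow_neg hδ.le] at hj
  exact hseg (mem_biUnion (Finset.mem_coe.2 (Finset.mem_range.2 hj)) (T.mem_seg_iff.2 ⟨hx, htj⟩))

lemma volume_param_eq_one : volume {x | T.param x = 1} = 0 := by
  have hne : (ℝ ∙ T.dir)ᗮ ≠ ⊤ := fun h => by
    have hdir : T.dir ∈ (ℝ ∙ T.dir)ᗮ := h ▸ Submodule.mem_top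
    rw [Submodule.mem_orthogonal_singleton_iff_inner_right, T.inner_dir_self] at hdir
    exact one_ne_zero hdir
  have hset : {x | T.param x = 1} = (· + -(T.base + T.dir)) ⁻¹' (ℝ ∙ T.dir)ᗮ := by
    ext x
    rw [mem_preimage, SetLike.mem_coe, Submodule.mem_orthogonal_singleton_iff_inner_right,
      real_inner_comm, ← sub_eq_add_neg, sub_add_eq_sub_sub, inner_sub_left, T.inner_dir_self,
      mem_ofPred_eq, param, sub_eq_zero]
  rw [hset, measure_preimage_add_right]
  exact Measure.addHaar_submodule volume _ hne

lemma volume_inter_biUnion_seg (δ ε : ℝ) {Z : Set (EuclideanSpace ℝ (Fin 3))}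
    (hZ : MeasurableSet Z) (L : Finset ℕ) :
    volume (Z ∩ ⋃ j ∈ L, T.seg δ ε j) = ∑ j ∈ L, volume (Z ∩ T.seg δ ε j) := by
  rw [inter_iUnion₂]
  exact measure_biUnion_finset
    (fun i _ j _ hij => ((T.pairwise_disjoint_seg δ ε hij).mono inter_subset_right
      inter_subset_right)) fun j _ => hZ.inter (T.measurableSet_seg δ ε j)

lemma volume_inter_biUnion_range_seg {δ : ℝ} (hδ : 0 < δ) (ε : ℝ)
    {Z : Set (EuclideanSpace ℝ (Fin 3))} (hZT : Z ⊆ T.toSet δ) :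
    volume (Z ∩ ⋃ j ∈ Finset.range ⌈δ ^ (-ε)⌉₊, T.seg δ ε j) = volume Z := by
  set U := ⋃ j ∈ Finset.range ⌈δ ^ (-ε)⌉₊, T.seg δ ε j
  have hnull : volume (Z \ U) = 0 := measure_mono_null
    (fun x hx => T.param_eq_one_of_mem_toSet_of_notMem_seg hδ (hZT hx.1) hx.2)
    T.volume_param_eq_one
  refine le_antisymm (measure_mono inter_subset_left) ?_
  simpa [hnull] using measure_le_inter_add_sdiff volume Z U

lemma ofReal_mul_le_volume {δ ε a c : ℝ} {n : ℕ} {Y : Set (EuclideanSpace ℝ (Fin 3))}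
    (hY : MeasurableSet Y) (ha : 0 ≤ a)
    (hseg : ∀ j < n, 0 < volume (Y ∩ T.seg δ ε j) → ENNReal.ofReal a ≤ volume (Y ∩ T.seg δ ε j))
    (hcard : c ≤ ({j : ℕ | j < n ∧ 0 < volume (Y ∩ T.seg δ ε j)}.ncard : ℝ)) :
    ENNReal.ofReal (c * a) ≤ volume Y := by
  set P := (Finset.range n).filter fun j => 0 < volume (Y ∩ T.seg δ ε j)
  have hP : {j : ℕ | j < n ∧ 0 < volume (Y ∩ T.seg δ ε j)} = P := by ext; simp [P]
  rw [hP, ncard_coe_finset] at hcard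
  calc ENNReal.ofReal (c * a) ≤ #P • ENNReal.ofReal a := by
        rw [nsmul_eq_mul, ← ENNReal.ofReal_natCast, ← ENNReal.ofReal_mul (Nat.cast_nonneg _)]
        exact ENNReal.ofReal_le_ofReal (mul_le_mul_of_nonneg_right hcard ha)
    _ ≤ ∑ j ∈ P, volume (Y ∩ T.seg δ ε j) := Finset.card_nsmul_le_sum _ _ _ fun j hj => by
        simp only [P, Finset.mem_filter, Finset.mem_range] at hj
        exact hseg j hj.1 hj.2
    _ = volume (Y ∩ ⋃ j ∈ P, T.seg δ ε j) := (T.volume_inter_biUnion_seg δ ε hY P).symm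
    _ ≤ volume Y := measure_mono inter_subset_left

lemma inter_biUnion_seg_inter_seg (δ ε : ℝ) (Z : Set (EuclideanSpace ℝ (Fin 3)))
    (L : Finset ℕ) (j : ℕ) :
    (Z ∩ ⋃ i ∈ L, T.seg δ ε i) ∩ T.seg δ ε j = if j ∈ L then Z ∩ T.seg δ ε j else ∅ := by
  split_ifs with hj
  · ext x
    exact ⟨fun ⟨⟨hxZ, _⟩, hxj⟩ => ⟨hxZ, hxj⟩, fun ⟨hxZ, hxj⟩ => ⟨⟨hxZ, mem_biUnion hj hxj⟩, hxj⟩⟩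
  · refine eq_empty_of_forall_notMem fun x ⟨⟨_, hx⟩, hxj⟩ => ?_
    obtain ⟨i, hi, hxi⟩ := mem_iUnion₂.1 hx
    exact disjoint_left.1 (T.pairwise_disjoint_seg δ ε (ne_of_mem_of_not_mem hi hj)) hxi hxj

lemma quantTwoEnds_inter_biUnion_seg {δ ε ε' C a : ℝ} {Z : Set (EuclideanSpace ℝ (Fin 3))}
    {L : Finset ℕ} (hL : ∀ j ∈ L, j < ⌈δ ^ (-ε)⌉₊) (ha : 0 < a)
    (hZ : ∀ j ∈ L, ENNReal.ofReal a ≤ volume (Z ∩ T.seg δ ε j) ∧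
      volume (Z ∩ T.seg δ ε j) ≤ ENNReal.ofReal (C * a))
    (hcard : δ ^ (-ε') ≤ #L) : QuantTwoEnds δ ε ε' C T (Z ∩ ⋃ j ∈ L, T.seg δ ε j) := by
  have hpos (j : ℕ) : 0 < volume ((Z ∩ ⋃ i ∈ L, T.seg δ ε i) ∩ T.seg δ ε j) ↔ j ∈ L := by
    rw [inter_biUnion_seg_inter_seg]
    split_ifs with hj
    · exact iff_of_true ((ENNReal.ofReal_pos.2 ha).trans_le (hZ j hj).1) hj
    · simp [hj]
  refine ⟨⟨a, ha, fun j _ hj => ?_⟩, ?_⟩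
  · rw [hpos] at hj
    rw [inter_biUnion_seg_inter_seg, if_pos hj]
    exact hZ j hj
  · have hset : {j | j < ⌈δ ^ (-ε)⌉₊ ∧
        0 < volume ((Z ∩ ⋃ i ∈ L, T.seg δ ε i) ∩ T.seg δ ε j)} = L := by
      ext j
      rw [mem_ofPred_eq, hpos, Finset.mem_coe]
      exact ⟨And.right, fun hj => ⟨hL j hj, hj⟩⟩
    rwa [hset, ncard_coe_finset]

noncomputable def segVol (δ ε : ℝ) (Z : Set (EuclideanSpace ℝ (Fin 3))) (j : ℕ) : ℝ :=
  (volume (Z ∩ T.seg δ ε j)).toReal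

lemma segVol_nonneg (δ ε : ℝ) (Z : Set (EuclideanSpace ℝ (Fin 3))) (j : ℕ) :
    0 ≤ T.segVol δ ε Z j :=
  ENNReal.toReal_nonneg

lemma volume_inter_biUnion_seg_eq_ofReal_sum {δ ε : ℝ} {Z : Set (EuclideanSpace ℝ (Fin 3))}
    (hZ : MeasurableSet Z) {L : Finset ℕ} (hL : ∀ j ∈ L, volume (Z ∩ T.seg δ ε j) ≠ ⊤) :
    volume (Z ∩ ⋃ j ∈ L, T.seg δ ε j) = ENNReal.ofReal (∑ j ∈ L, T.segVol δ ε Z j) := by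
  rw [T.volume_inter_biUnion_seg δ ε hZ,
    ENNReal.ofReal_sum_of_nonneg fun j _ => T.segVol_nonneg δ ε Z j]
  exact Finset.sum_congr rfl fun j hj => (ENNReal.ofReal_toReal (hL j hj)).symm

lemma quantTwoEnds_inter_biUnion_dyadicLevel {δ ε ε' M : ℝ}
    {Z : Set (EuclideanSpace ℝ (Fin 3))} {k : ℕ} (hM : 0 < M)
    (hZ : ∀ j < ⌈δ ^ (-ε)⌉₊, volume (Z ∩ T.seg δ ε j) ≠ ⊤)
    (hcard : δ ^ (-ε') ≤ #(dyadicLevel (Finset.range ⌈δ ^ (-ε)⌉₊) (T.segVol δ ε Z) M k)) :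
    QuantTwoEnds δ ε ε' 2 T
      (Z ∩ ⋃ j ∈ dyadicLevel (Finset.range ⌈δ ^ (-ε)⌉₊) (T.segVol δ ε Z) M k, T.seg δ ε j) := by
  refine T.quantTwoEnds_inter_biUnion_seg
    (fun j hj => Finset.mem_range.1 (dyadicLevel_subset _ _ _ _ hj)) (a := M / 2 ^ (k + 1))
    (by positivity) (fun j hj => ?_) hcard
  obtain ⟨hj, hjk⟩ := Finset.mem_filter.1 hj
  rw [← ENNReal.ofReal_toReal (hZ j (Finset.mem_range.1 hj))]
  refine ⟨ENNReal.ofReal_le_ofReal hjk.1.le, ENNReal.ofReal_le_ofReal ?_⟩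
  calc T.segVol δ ε Z j ≤ M / 2 ^ k := hjk.2
    _ = 2 * (M / 2 ^ (k + 1)) := by rw [pow_succ]; field_simp

end Tube

lemma exists_two_pow_ge_inv_sq {δ : ℝ} (hδ : 0 < δ) (hlog : 2 ≤ log δ⁻¹) :
    ∃ K : ℕ, δ⁻¹ ^ 2 ≤ 2 ^ K ∧ 2 * ((K : ℝ) + 1) ≤ 8 * log δ⁻¹ := by
  have hone : 1 ≤ δ⁻¹ ^ 2 := one_le_pow₀ (le_of_lt ((log_pos_iff (by positivity)).1 (by linarith)))
  obtain ⟨n, hn, hn'⟩ := exists_nat_pow_near hone one_lt_two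
  refine ⟨n + 1, hn'.le, ?_⟩
  have hn_log : n * log 2 ≤ 2 * log δ⁻¹ := by
    simpa only [log_pow, Nat.cast_ofNat] using log_le_log (by positivity) hn
  have hlog2 := log_two_gt_d9
  push_cast
  nlinarith [mul_le_mul_of_nonneg_left hlog2.le (Nat.cast_nonneg (α := ℝ) n)]

lemma exists_large_dyadicLevel {ι : Type*} {s : Finset ι} {f : ι → ℝ} {a C₀ δ ε' : ℝ}
    (ha : 0 < a) (hC₀ : 0 < C₀) (hδ : 0 < δ) (hε' : 0 ≤ ε') (hδC₀ : 2 * C₀ * δ ≤ 1)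
    (hlog : 2 ≤ log δ⁻¹) (hpow : 8 * C₀ * log δ⁻¹ ≤ δ ^ (-(ε' / 4)))
    (hs : (#s : ℝ) ≤ 2 / δ) (hf : ∀ j ∈ s, f j ≤ C₀ * a)
    (hsum : δ ^ (-(3 * ε' / 4)) * a ≤ ∑ j ∈ s, f j) :
    ∃ k, δ ^ (-(ε' / 2)) ≤ #(dyadicLevel s f (C₀ * a) k) ∧
      (∑ j ∈ s, f j) / (8 * log δ⁻¹) ≤ ∑ j ∈ dyadicLevel s f (C₀ * a) k, f j := by
  set S := ∑ j ∈ s, f j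
  have hδ1 : δ ≤ 1 := (log_nonpos_iff hδ.le).1 (by linarith [log_inv δ])
  have haS : a ≤ S := le_trans
    (le_mul_of_one_le_left ha.le (one_le_rpow_of_pos_of_le_one_of_nonpos hδ hδ1 (by linarith)))
    hsum
  obtain ⟨K, hK, hK_log⟩ := exists_two_pow_ge_inv_sq hδ hlog
  have htail : #s * (C₀ * a) ≤ 2 ^ K * S := calc
    #s * (C₀ * a) ≤ 2 / δ * (C₀ * a) := by gcongr
    _ = 2 * C₀ * δ * δ⁻¹ ^ 2 * a := by field_simp
    _ ≤ 1 * 2 ^ K * a := by gcongr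
    _ ≤ 2 ^ K * S := by rw [one_mul]; gcongr
  obtain ⟨k, hk⟩ := exists_sum_dyadicLevel_ge s f (by positivity) hf htail
  set L := dyadicLevel s f (C₀ * a) k
  have hS_L : S / (8 * log δ⁻¹) ≤ ∑ j ∈ L, f j :=
    (div_le_div_of_nonneg_left (ha.le.trans haS) (by positivity) hK_log).trans hk
  have hL_card : ∑ j ∈ L, f j ≤ #L * (C₀ * a) := by
    simpa using Finset.sum_le_card_nsmul L f (C₀ * a) fun j hj =>
      hf j (dyadicLevel_subset _ _ _ _ hj)
  refine ⟨k, ?_, hS_L⟩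
  have hrpow : δ ^ (-(ε' / 2)) * δ ^ (-(ε' / 4)) = δ ^ (-(3 * ε' / 4)) := by
    rw [← rpow_add hδ]
    ring_nf
  have hmul : δ ^ (-(ε' / 2)) * (8 * C₀ * log δ⁻¹ * a) ≤ #L * (8 * C₀ * log δ⁻¹ * a) := calc
    _ ≤ δ ^ (-(ε' / 2)) * (δ ^ (-(ε' / 4)) * a) := by gcongr
    _ ≤ S := by rw [← mul_assoc, hrpow]; exact hsum
    _ ≤ 8 * log δ⁻¹ * ∑ j ∈ L, f j := by rwa [div_le_iff₀' (by positivity)] at hS_L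
    _ ≤ 8 * log δ⁻¹ * (#L * (C₀ * a)) := by gcongr
    _ = #L * (8 * C₀ * log δ⁻¹ * a) := by ring
  exact le_of_mul_le_mul_right hmul (by positivity)

lemma eventually_small_scale {ε' C₀ : ℝ} (hε' : 0 < ε') (hC₀ : 0 < C₀) :
    ∀ᶠ δ in 𝓝[>] (0 : ℝ),
      2 * C₀ * δ ≤ 1 ∧ 2 ≤ log δ⁻¹ ∧ 8 * C₀ * log δ⁻¹ ≤ δ ^ (-(ε' / 4)) := by
  have hlin : Tendsto (fun δ : ℝ => 2 * C₀ * δ) (𝓝[>] 0) (𝓝 0) := by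
    simpa using ((continuous_const_mul (2 * C₀)).tendsto 0).mono_left nhdsWithin_le_nhds
  have hlog : Tendsto (fun δ : ℝ => log δ⁻¹) (𝓝[>] 0) atTop :=
    tendsto_log_atTop.comp tendsto_inv_nhdsGT_zero
  have hlo := (isLittleO_log_rpow_nhdsGT_zero (r := -(ε' / 4)) (by linarith)).bound
    (c := (8 * C₀)⁻¹) (by positivity)
  refine (hlin.eventually (eventually_le_nhds one_pos)).and ((hlog.eventually_ge_atTop 2).and ?_)
  filter_upwards [hlo, self_mem_nhdsWithin] with δ hδ (hδpos : 0 < δ)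
  rw [norm_eq_abs, norm_of_nonneg (rpow_nonneg hδpos.le _)] at hδ
  calc 8 * C₀ * log δ⁻¹ ≤ 8 * C₀ * |log δ| := by
        rw [log_inv]
        gcongr
        exact neg_le_abs _
    _ ≤ 8 * C₀ * ((8 * C₀)⁻¹ * δ ^ (-(ε' / 4))) := by gcongr
    _ = δ ^ (-(ε' / 4)) := by field_simp


theorem QuantTwoEnds.exists_large_subset {δ ε ε' C₀ : ℝ} {T : Tube}
    {Y Y' : Set (EuclideanSpace ℝ (Fin 3))} (hQ : QuantTwoEnds δ ε ε' C₀ T Y) (hδ : 0 < δ)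
    (hε : ε ≤ 1) (hε' : 0 ≤ ε') (hC₀ : 0 < C₀) (hδC₀ : 2 * C₀ * δ ≤ 1) (hlog : 2 ≤ log δ⁻¹)
    (hpow : 8 * C₀ * log δ⁻¹ ≤ δ ^ (-(ε' / 4))) (hYm : MeasurableSet Y) (hYT : Y ⊆ T.toSet δ)
    (hY'm : MeasurableSet Y') (hY'Y : Y' ⊆ Y)
    (hYY' : ENNReal.ofReal (δ ^ (ε' / 4)) * volume Y ≤ volume Y') :
    ∃ Y'' : Set (EuclideanSpace ℝ (Fin 3)), MeasurableSet Y'' ∧ Y'' ⊆ Y' ∧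
      QuantTwoEnds δ ε (ε' / 2) 2 T Y'' ∧
      ENNReal.ofReal ((8 * log δ⁻¹)⁻¹) * volume Y' ≤ volume Y'' := by
  obtain ⟨⟨a, ha, hY_seg⟩, hY_card⟩ := hQ
  set N := ⌈δ ^ (-ε)⌉₊
  have hY'_seg : ∀ j < N, volume (Y' ∩ T.seg δ ε j) ≤ ENNReal.ofReal (C₀ * a) := by
    intro j hj
    refine (measure_mono (inter_subset_inter_left _ hY'Y)).trans ?_
    rcases eq_zero_or_pos (volume (Y ∩ T.seg δ ε j)) with h | h
    · exact h ▸ zero_le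
    · exact (hY_seg j hj h).2
  have hY'_fin : ∀ j < N, volume (Y' ∩ T.seg δ ε j) ≠ ⊤ := fun j hj =>
    ne_top_of_le_ne_top ENNReal.ofReal_ne_top (hY'_seg j hj)
  have hvol {L : Finset ℕ} (hL : L ⊆ Finset.range N) :
      volume (Y' ∩ ⋃ j ∈ L, T.seg δ ε j) = ENNReal.ofReal (∑ j ∈ L, T.segVol δ ε Y' j) :=
    T.volume_inter_biUnion_seg_eq_ofReal_sum hY'm fun j hj =>
      hY'_fin j (Finset.mem_range.1 (hL hj))
  have hY' : volume Y' = ENNReal.ofReal (∑ j ∈ Finset.range N, T.segVol δ ε Y' j) := by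
    rw [← hvol subset_rfl, T.volume_inter_biUnion_range_seg hδ ε (hY'Y.trans hYT)]
  have hY'_ge : δ ^ (-(3 * ε' / 4)) * a ≤ ∑ j ∈ Finset.range N, T.segVol δ ε Y' j := by
    rw [← ENNReal.ofReal_le_ofReal_iff (Finset.sum_nonneg fun j _ => T.segVol_nonneg δ ε Y' j),
      ← hY']
    calc ENNReal.ofReal (δ ^ (-(3 * ε' / 4)) * a)
        = ENNReal.ofReal (δ ^ (ε' / 4)) * ENNReal.ofReal (δ ^ (-ε') * a) := by
          rw [← ENNReal.ofReal_mul (rpow_nonneg hδ.le _), ← mul_assoc, ← rpow_add hδ]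
          ring_nf
      _ ≤ ENNReal.ofReal (δ ^ (ε' / 4)) * volume Y := by
          gcongr
          exact T.ofReal_mul_le_volume hYm ha.le (fun j hj h => (hY_seg j hj h).1) hY_card
      _ ≤ volume Y' := hYY'
  have hδ1 : δ ≤ 1 := (log_nonpos_iff hδ.le).1 (by linarith [log_inv δ])
  obtain ⟨k, hk_card, hk_sum⟩ := exists_large_dyadicLevel (f := T.segVol δ ε Y')
    ha hC₀ hδ hε' hδC₀ hlog hpow
    (by simpa using natCeil_rpow_neg_le_two_div hδ hδ1 hε)
    (fun j hj => ENNReal.toReal_le_of_le_ofReal (by positivity)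
      (hY'_seg j (Finset.mem_range.1 hj))) hY'_ge
  refine ⟨_, hY'm.inter (Finset.measurableSet_biUnion _ fun j _ => T.measurableSet_seg δ ε j),
    inter_subset_left,
    T.quantTwoEnds_inter_biUnion_dyadicLevel (by positivity) hY'_fin hk_card, ?_⟩
  rw [hvol (dyadicLevel_subset _ _ _ _), hY', ← ENNReal.ofReal_mul (by positivity),
    inv_mul_eq_div]
  exact ENNReal.ofReal_le_ofReal hk_sum

/-- **Stability of the two-ends condition under passing to large subsets.** If
`Y` is a quantitative two-ends shading of a `δ×δ×1` tube at scale `ε'` with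
constant `C₀` and `Y' ⊆ Y` has `|Y'| ≥ δ^{ε'/4}|Y|`, then a further subset
`Y'' ⊆ Y'` of measure `≥ (C log δ⁻¹)⁻¹|Y'|` is quantitative two-ends at scale
`ε'/2` with constant `2`. -/
theorem two_ends_stable_under_subsets :
    ∃ C : ℝ, 0 < C ∧
      ∀ ε ε' C₀ : ℝ, ε ∈ Set.Ioo (0 : ℝ) 1 → ε ^ (100 : ℕ) < ε' → ε' < ε → 1 ≤ C₀ →
      ∃ δ₀ : ℝ, 0 < δ₀ ∧
        ∀ δ : ℝ, 0 < δ → δ < δ₀ →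
        ∀ (T : Tube) (Y Y' : Set (EuclideanSpace ℝ (Fin 3))),
          MeasurableSet Y → Y ⊆ T.toSet δ → QuantTwoEnds δ ε ε' C₀ T Y →
          MeasurableSet Y' → Y' ⊆ Y →
          ENNReal.ofReal (δ ^ (ε' / 4)) * volume Y ≤ volume Y' →
          ∃ Y'' : Set (EuclideanSpace ℝ (Fin 3)),
            MeasurableSet Y'' ∧ Y'' ⊆ Y' ∧
            QuantTwoEnds δ ε (ε' / 2) 2 T Y'' ∧
            ENNReal.ofReal ((C * Real.log δ⁻¹)⁻¹) * volume Y' ≤ volume Y'' := by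
  refine ⟨8, by norm_num, fun ε ε' C₀ hε hε100 _ hC₀ => ?_⟩
  have hε'_pos : 0 < ε' := (pow_pos hε.1 100).trans hε100
  have hC₀_pos : 0 < C₀ := zero_lt_one.trans_le hC₀
  obtain ⟨δ₀, hδ₀, hsmall⟩ :=
    (nhdsGT_basis (0 : ℝ)).eventually_iff.1 (eventually_small_scale hε'_pos hC₀_pos)
  refine ⟨δ₀, hδ₀, fun δ hδ hδδ₀ T Y Y' hYm hYT hQ hY'm hY'Y hYY' => ?_⟩
  obtain ⟨hδC₀, hlog, hpow⟩ := hsmall ⟨hδ, hδδ₀⟩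
  exact hQ.exists_large_subset hδ hε.2.le hε'_pos.le hC₀_pos hδC₀ hlog hpow hYm hYT hY'm hY'Y
    hYY'
end

section
/- Numerology for the intermediate-scale case: Let 45/14 < p < 10/3. Then for all real numbers R ≥ 1, r > 0, D > 0, λ > 0 and 0 < η₁ ≤ r, setting M = min{ r^{3/4} λ^{-1} R^{-1/2}, r R^{-1/2} }, C₁ = R · r^{2-p} · λ · η₁^{(2-p)/4} · M^{(p-2)/2}, C₂ = D · r^{(5-2p)/2} · η₁^{(4-p)/4} · M^{(p-2)/2}, and C₃ = min{ D^{3-p}, D · R^{(2-p)/4} } · r^{(3-p)/2} · η₁^{(4-p)/4}, one has min{ C₁, C₂, C₃ } ≤ 1. -/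
/-!
Write `a = log R`, `x = log r`, `l = log λ`, `d = log D`, `e = log η₁`. Replacing `M` by its first
argument turns `log C₁` and `log C₂` into linear forms `ℓ₁`, `ℓ₂` in these variables, replacing it
by its second argument turns `log C₂` into `ℓ₂'`, and replacing the inner minimum of `C₃` by
`D^{3-p}` turns `log C₃` into `ℓ₃`; each of these only increases the `Cᵢ`. They cannot all be
positive, because
`4(10-3p)(p-2) ℓ₁ + 4(10-3p)(4-p) ℓ₂ + 4(8p-25) ℓ₂' + 4(3p-5) ℓ₃ + (14p-45)(p-2) a + p(p-2)(x-e)`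
vanishes identically, while `a ≥ 0`, `x ≥ e` and all weights are positive for `45/14 < p < 10/3`.
-/

theorem numerology_exponents_not_all_pos {p : ℝ} (hp₁ : 45 / 14 < p) (hp₂ : p < 10 / 3)
    {a x l d e : ℝ} (ha : 0 ≤ a) (hex : e ≤ x)
    (h₁ : 0 < a + x * (2 - p) + l + e * ((2 - p) / 4)
      + (x * (3 / 4) + -l + a * (-1 / 2)) * ((p - 2) / 2))
    (h₂ : 0 < d + x * ((5 - 2 * p) / 2) + e * ((4 - p) / 4)
      + (x * (3 / 4) + -l + a * (-1 / 2)) * ((p - 2) / 2))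
    (h₂' : 0 < d + x * ((5 - 2 * p) / 2) + e * ((4 - p) / 4)
      + (x + a * (-1 / 2)) * ((p - 2) / 2))
    (h₃ : 0 < d * (3 - p) + x * ((3 - p) / 2) + e * ((4 - p) / 4)) : False := by
  have hw₁ : 0 < 4 * (10 - 3 * p) * (p - 2) := by nlinarith
  have hw₂ : 0 < 4 * (10 - 3 * p) * (4 - p) := by nlinarith
  have hw₃ : 0 < 4 * (8 * p - 25) := by linarith
  have hw₄ : 0 < 4 * (3 * p - 5) := by linarith
  have hw₅ : 0 < (14 * p - 45) * (p - 2) := by nlinarith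
  have hw₆ : 0 < p * (p - 2) := by nlinarith
  have : (0 : ℝ) < 0 := by
    linear_combination mul_pos hw₁ h₁ + mul_pos hw₂ h₂ + mul_pos hw₃ h₂' + mul_pos hw₄ h₃
      + mul_nonneg hw₅.le ha + mul_nonneg hw₆.le (sub_nonneg.2 hex)
  exact lt_irrefl 0 this

theorem numerology_log_form {p : ℝ} (hp₁ : 45 / 14 < p) (hp₂ : p < 10 / 3) {a x l d e m : ℝ}
    (ha : 0 ≤ a) (hex : e ≤ x) (hm₁ : m ≤ x * (3 / 4) + -l + a * (-1 / 2))
    (hm₂ : m ≤ x + a * (-1 / 2)) :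
    min (a + x * (2 - p) + l + e * ((2 - p) / 4) + m * ((p - 2) / 2))
      (min (d + x * ((5 - 2 * p) / 2) + e * ((4 - p) / 4) + m * ((p - 2) / 2))
        (min (d * (3 - p)) (d + a * ((2 - p) / 4)) + x * ((3 - p) / 2) + e * ((4 - p) / 4)))
      ≤ 0 := by
  by_contra! h
  simp only [lt_min_iff] at h
  obtain ⟨h₁, h₂, h₃⟩ := h
  have hs : 0 ≤ (p - 2) / 2 := by linarith
  have hm₁s := mul_le_mul_of_nonneg_right hm₁ hs
  have hm₂s := mul_le_mul_of_nonneg_right hm₂ hs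
  exact numerology_exponents_not_all_pos (l := l) (d := d) hp₁ hp₂ ha hex
    (by linarith) (by linarith) (by linarith)
    (by linarith [min_le_left (d * (3 - p)) (d + a * ((2 - p) / 4))])

/-- **Numerology for the intermediate-scale case.** For `45/14 < p < 10/3`
and all `R ≥ 1`, `r > 0`, `D > 0`, `λ > 0`, `0 < η₁ ≤ r`, with
`M = min{r^{3/4} λ⁻¹ R^{-1/2}, r R^{-1/2}}`, the minimum of
`C₁ = R r^{2-p} λ η₁^{(2-p)/4} M^{(p-2)/2}`,
`C₂ = D r^{(5-2p)/2} η₁^{(4-p)/4} M^{(p-2)/2}`, and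
`C₃ = min{D^{3-p}, D R^{(2-p)/4}} r^{(3-p)/2} η₁^{(4-p)/4}` is at most `1`. -/
theorem numerology_intermediate_scale (p : ℝ) (hp₁ : 45 / 14 < p) (hp₂ : p < 10 / 3)
    (R r D lam η₁ : ℝ) (hR : 1 ≤ R) (hr : 0 < r) (hD : 0 < D) (hlam : 0 < lam)
    (hη₁ : 0 < η₁) (hη₁r : η₁ ≤ r) :
    min (R * r ^ (2 - p) * lam * η₁ ^ ((2 - p) / 4) *
        (min (r ^ ((3 : ℝ) / 4) * lam⁻¹ * R ^ (-(1 : ℝ) / 2))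
          (r * R ^ (-(1 : ℝ) / 2))) ^ ((p - 2) / 2))
      (min (D * r ^ ((5 - 2 * p) / 2) * η₁ ^ ((4 - p) / 4) *
          (min (r ^ ((3 : ℝ) / 4) * lam⁻¹ * R ^ (-(1 : ℝ) / 2))
            (r * R ^ (-(1 : ℝ) / 2))) ^ ((p - 2) / 2))
        (min (D ^ (3 - p)) (D * R ^ ((2 - p) / 4)) *
          r ^ ((3 - p) / 2) * η₁ ^ ((4 - p) / 4))) ≤ 1 := by
  obtain ⟨a, rfl⟩ : ∃ a, Real.exp a = R := ⟨Real.log R, Real.exp_log (by linarith)⟩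
  obtain ⟨x, rfl⟩ : ∃ x, Real.exp x = r := ⟨Real.log r, Real.exp_log hr⟩
  obtain ⟨d, rfl⟩ : ∃ d, Real.exp d = D := ⟨Real.log D, Real.exp_log hD⟩
  obtain ⟨l, rfl⟩ : ∃ l, Real.exp l = lam := ⟨Real.log lam, Real.exp_log hlam⟩
  obtain ⟨e, rfl⟩ : ∃ e, Real.exp e = η₁ := ⟨Real.log η₁, Real.exp_log hη₁⟩
  simp only [← Real.exp_mul, ← Real.exp_neg, ← Real.exp_add, ← Real.exp_monotone.map_min,
    Real.exp_le_one_iff]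
  exact numerology_log_form hp₁ hp₂ (Real.one_le_exp_iff.1 hR) (Real.exp_le_exp.1 hη₁r)
    (min_le_left _ _) (min_le_right _ _)
end
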